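/- Let k > 0, L > 0, α ∈ ℝ, α_n = α + 2nπ/L and β_n = √(k² − α_n²) if |α_n| ≤ k, β_n = i√(α_n² − k²) if |α_n| > k. Suppose (A_n)_{n∈ℤ} are complex numbers such that Σ_n |A_n e^{i β_n (h−σ)}|² < ∞ for some h ∈ ℝ and σ > 0. Then the series u(x₁,x₂) = Σ_n A_n e^{i α_n x₁ + i β_n x₂} converges absolutely and uniformly on the half-plane {(x₁,x₂) : x₂ ≥ h}, and u is uniformly bounded there; moreover 2·Σ_n |A_n e^{i α_n x₁ + i β_n x₂}| ≤ Σ_n |A_n e^{i β_n (h−σ)}|² + Σ_{|α_n| ≤ k} 1 + Σ_{|α_n| > k} |e^{i β_n (x₂ − h + σ)}|² for all x₂ ≥ h. -/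

import Mathlib

open Real

/-- The Rayleigh lateral wavenumbers `α_n = α + 2nπ/L`. -/
noncomputable def alphaN (α L : ℝ) (n : ℤ) : ℝ := α + 2 * n * π / L

/-- The Rayleigh vertical wavenumbers `β_n`. -/
noncomputable def betaN (k α L : ℝ) (n : ℤ) : ℂ :=
  if |alphaN α L n| ≤ k then ((Real.sqrt (k ^ 2 - (alphaN α L n) ^ 2) : ℝ) : ℂ)
  else Complex.I * ((Real.sqrt ((alphaN α L n) ^ 2 - k ^ 2) : ℝ) : ℂ)

/-!
Write the `n`-th term as `a_n · e_n(x₂ - h + σ)`, where `a_n = |A_n e^{iβ_n(h-σ)}|` and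
`e_n(t) = |e^{iβ_n t}| = e^{-t Im β_n}`; then `2 a_n e_n ≤ a_n² + e_n²` termwise. Since
`Im β_n ≥ |α_n| - k ≥ 2π|n|/L - |α| - k`, the factor `e_n(t)` is at most `1`, decreases in `t`,
and decays geometrically in `|n|` once `t > 0`, so `Σ e_n(t)²` is bounded uniformly for `t ≥ σ`.
It splits into one unit per propagating mode (`|α_n| ≤ k`, where `β_n` is real) plus the
evanescent contributions.
-/

open Complex

section SquareSummable

variable {ι : Type*} {f g : ι → ℝ}

theorem Summable.mul_of_summable_sq (hf : Summable fun i => f i ^ 2)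
    (hg : Summable fun i => g i ^ 2) : Summable fun i => f i * g i := by
  refine Summable.of_norm_bounded ((hf.add hg).div_const 2) fun i => ?_
  rw [Real.norm_eq_abs, abs_mul, le_div_iff₀ two_pos, ← sq_abs (f i), ← sq_abs (g i)]
  linarith [two_mul_le_add_sq |f i| |g i|]

theorem two_mul_tsum_mul_le_tsum_sq_add_tsum_sq (hf : Summable fun i => f i ^ 2)
    (hg : Summable fun i => g i ^ 2) :
    2 * ∑' i, f i * g i ≤ ∑' i, f i ^ 2 + ∑' i, g i ^ 2 := by
  rw [← tsum_mul_left, ← hf.tsum_add hg]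
  exact ((hf.mul_of_summable_sq hg).mul_left 2).tsum_le_tsum
    (fun i => by linarith [two_mul_le_add_sq (f i) (g i)]) (hf.add hg)

end SquareSummable

theorem Real.summable_exp_neg_mul_abs_int {c : ℝ} (hc : 0 < c) :
    Summable fun n : ℤ => Real.exp (-(c * |(n : ℝ)|)) := by
  have hnat : Summable fun n : ℕ => Real.exp (n * -c) :=
    Real.summable_exp_nat_mul_iff.mpr (neg_lt_zero.mpr hc)
  refine summable_int_iff_summable_nat_and_neg.mpr ⟨?_, ?_⟩ <;>
    refine hnat.congr fun n => ?_ <;> simp [mul_comm]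

theorem Complex.norm_exp_I_mul_mul_ofReal (z : ℂ) (t : ℝ) :
    ‖exp (I * z * t)‖ = Real.exp (-(z.im * t)) := by
  simp [norm_exp]

theorem Complex.norm_mul_exp_I_mul_add_I_mul (c β : ℂ) {a x₁ x₂ : ℝ} (s t : ℝ)
    (hx : s + t = x₂) :
    ‖c * exp (I * a * x₁ + I * β * x₂)‖ = ‖c * exp (I * β * s)‖ * ‖exp (I * β * t)‖ := by
  subst hx
  simp only [norm_mul, norm_exp, mul_assoc, ← Real.exp_add]
  congr 2
  simp [Complex.mul_re, Complex.mul_im]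
  ring

section Rayleigh

variable {k α L : ℝ}

theorem abs_alphaN_ge (hL : 0 < L) (n : ℤ) :
    2 * π / L * |(n : ℝ)| - |α| ≤ |alphaN α L n| := by
  have h : 2 * π / L * |(n : ℝ)| = |alphaN α L n - α| := by
    rw [alphaN, add_sub_cancel_left, abs_div, abs_mul, abs_mul, abs_of_pos hL, abs_two,
      abs_of_pos pi_pos]
    ring
  linarith [abs_sub (alphaN α L n) α]

theorem betaN_im_nonneg (n : ℤ) : 0 ≤ (betaN k α L n).im := by
  unfold betaN
  split_ifs <;> simp [Real.sqrt_nonneg]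

theorem betaN_im_of_abs_le {n : ℤ} (hn : |alphaN α L n| ≤ k) : (betaN k α L n).im = 0 := by
  simp [betaN, hn]

theorem abs_alphaN_sub_le_betaN_im (hk : 0 ≤ k) (n : ℤ) :
    |alphaN α L n| - k ≤ (betaN k α L n).im := by
  by_cases hn : |alphaN α L n| ≤ k
  · linarith [betaN_im_nonneg (k := k) (α := α) (L := L) n]
  · simp only [betaN, if_neg hn, mul_im, I_re, ofReal_im, mul_zero, I_im, ofReal_re, one_mul,
      zero_add]
    rw [← sq_abs (alphaN α L n)]
    refine Real.le_sqrt_of_sq_le ?_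
    nlinarith

theorem norm_exp_I_mul_betaN_of_abs_le {n : ℤ} (hn : |alphaN α L n| ≤ k) (t : ℝ) :
    ‖exp (I * betaN k α L n * t)‖ = 1 := by
  simp [norm_exp_I_mul_mul_ofReal, betaN_im_of_abs_le hn]

theorem norm_exp_I_mul_betaN_le {s t : ℝ} (hst : s ≤ t) (n : ℤ) :
    ‖exp (I * betaN k α L n * t)‖ ≤ ‖exp (I * betaN k α L n * s)‖ := by
  simp only [norm_exp_I_mul_mul_ofReal, Real.exp_le_exp, neg_le_neg_iff]
  exact mul_le_mul_of_nonneg_left hst (betaN_im_nonneg n)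

theorem norm_exp_I_mul_betaN_le_one {t : ℝ} (ht : 0 ≤ t) (n : ℤ) :
    ‖exp (I * betaN k α L n * t)‖ ≤ 1 := by
  simpa using norm_exp_I_mul_betaN_le (k := k) (α := α) (L := L) ht n

theorem summable_norm_exp_I_mul_betaN (hk : 0 ≤ k) (hL : 0 < L) {t : ℝ} (ht : 0 < t) :
    Summable fun n => ‖exp (I * betaN k α L n * t)‖ := by
  have hc : 0 < 2 * π / L * t := by positivity
  refine ((Real.summable_exp_neg_mul_abs_int hc).mul_left
    (Real.exp ((|α| + k) * t))).of_nonneg_of_le (fun _ => norm_nonneg _) fun n => ?_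
  rw [norm_exp_I_mul_mul_ofReal, ← Real.exp_add, Real.exp_le_exp]
  nlinarith [abs_alphaN_ge (α := α) hL n, abs_alphaN_sub_le_betaN_im (α := α) (L := L) hk n]

theorem summable_sq_norm_exp_I_mul_betaN (hk : 0 ≤ k) (hL : 0 < L) {t : ℝ} (ht : 0 < t) :
    Summable fun n => ‖exp (I * betaN k α L n * t)‖ ^ 2 :=
  (summable_norm_exp_I_mul_betaN hk hL ht).of_nonneg_of_le (fun _ => by positivity) fun n =>
    pow_le_of_le_one (norm_nonneg _) (norm_exp_I_mul_betaN_le_one ht.le n) two_ne_zero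

theorem tsum_sq_norm_exp_I_mul_betaN (hk : 0 ≤ k) (hL : 0 < L) {t : ℝ} (ht : 0 < t) :
    ∑' n, ‖exp (I * betaN k α L n * t)‖ ^ 2
      = ∑' _n : {n : ℤ // |alphaN α L n| ≤ k}, (1 : ℝ)
        + ∑' n : {n : ℤ // k < |alphaN α L n|}, ‖exp (I * betaN k α L (n : ℤ) * t)‖ ^ 2 := by
  rw [← (summable_sq_norm_exp_I_mul_betaN hk hL ht).tsum_subtype_add_tsum_subtype_compl
    {n | |alphaN α L n| ≤ k}]
  congr 1
  · exact tsum_congr fun n => by simp [norm_exp_I_mul_betaN_of_abs_le n.2]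
  · exact (Equiv.subtypeEquivRight fun n => not_le).tsum_eq
      fun n : {n : ℤ // k < |alphaN α L n|} => ‖exp (I * betaN k α L (n : ℤ) * t)‖ ^ 2

end Rayleigh

theorem rayleigh_series_uniform_bound (k L α h σ : ℝ) (hk : 0 < k) (hL : 0 < L) (hσ : 0 < σ)
    (A : ℤ → ℂ)
    (hsum : Summable (fun n : ℤ =>
      ‖A n * Complex.exp (Complex.I * betaN k α L n * ((h - σ : ℝ) : ℂ))‖ ^ 2)) :
    (∃ g : ℤ → ℝ, Summable g ∧ ∀ n : ℤ, ∀ x₁ x₂ : ℝ, h ≤ x₂ →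
      ‖A n * Complex.exp (Complex.I * ((alphaN α L n : ℝ) : ℂ) * (x₁ : ℂ)
          + Complex.I * betaN k α L n * (x₂ : ℂ))‖ ≤ g n) ∧
    (∃ M : ℝ, ∀ x₁ x₂ : ℝ, h ≤ x₂ →
      ‖∑' n : ℤ, A n * Complex.exp (Complex.I * ((alphaN α L n : ℝ) : ℂ) * (x₁ : ℂ)
          + Complex.I * betaN k α L n * (x₂ : ℂ))‖ ≤ M) ∧
    (∀ x₁ x₂ : ℝ, h ≤ x₂ →
      2 * ∑' n : ℤ, ‖A n * Complex.exp (Complex.I * ((alphaN α L n : ℝ) : ℂ) * (x₁ : ℂ)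
          + Complex.I * betaN k α L n * (x₂ : ℂ))‖
        ≤ (∑' n : ℤ, ‖A n * Complex.exp (Complex.I * betaN k α L n * ((h - σ : ℝ) : ℂ))‖ ^ 2)
          + (∑' _n : {n : ℤ // |alphaN α L n| ≤ k}, (1 : ℝ))
          + (∑' n : {n : ℤ // k < |alphaN α L n|},
              ‖Complex.exp (Complex.I * betaN k α L (n : ℤ) * ((x₂ - h + σ : ℝ) : ℂ))‖ ^ 2)) := by
  set a : ℤ → ℝ := fun n => ‖A n * exp (I * betaN k α L n * ((h - σ : ℝ) : ℂ))‖
  set e : ℝ → ℤ → ℝ := fun t n => ‖exp (I * betaN k α L n * (t : ℂ))‖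
  have hterm : ∀ n (x₁ x₂ : ℝ), ‖A n * exp (I * ((alphaN α L n : ℝ) : ℂ) * (x₁ : ℂ)
      + I * betaN k α L n * (x₂ : ℂ))‖ = a n * e (x₂ - h + σ) n := fun n x₁ x₂ =>
    norm_mul_exp_I_mul_add_I_mul _ _ _ _ (by ring)
  set g : ℤ → ℝ := fun n => (a n ^ 2 + e σ n ^ 2) / 2
  have hg : Summable g := (hsum.add (summable_sq_norm_exp_I_mul_betaN hk.le hL hσ)).div_const 2
  have hbound : ∀ n (x₁ x₂ : ℝ), h ≤ x₂ → ‖A n * exp (I * ((alphaN α L n : ℝ) : ℂ) * (x₁ : ℂ)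
      + I * betaN k α L n * (x₂ : ℂ))‖ ≤ g n := by
    intro n x₁ x₂ hx
    have hdecay : e (x₂ - h + σ) n ^ 2 ≤ e σ n ^ 2 :=
      pow_le_pow_left₀ (norm_nonneg _) (norm_exp_I_mul_betaN_le (by linarith) n) 2
    rw [hterm]
    show _ ≤ (a n ^ 2 + e σ n ^ 2) / 2
    linarith [two_mul_le_add_sq (a n) (e (x₂ - h + σ) n)]
  refine ⟨⟨g, hg, hbound⟩, ⟨∑' n, g n, fun x₁ x₂ hx => ?_⟩, fun x₁ x₂ hx => ?_⟩
  · have hterm_summable := hg.of_nonneg_of_le (fun _ => norm_nonneg _) (hbound · x₁ x₂ hx)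
    exact (norm_tsum_le_tsum_norm hterm_summable).trans
      (hterm_summable.tsum_le_tsum (hbound · x₁ x₂ hx) hg)
  · rw [add_assoc, ← tsum_sq_norm_exp_I_mul_betaN hk.le hL (by linarith)]
    simp only [hterm]
    exact two_mul_tsum_mul_le_tsum_sq_add_tsum_sq hsum
      (summable_sq_norm_exp_I_mul_betaN hk.le hL (by linarith))
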